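/- If the letter N (the maximal entry) is in cell (i,j) of a standard tableau t with N cells, then the promotion sliding path of t.e (t after evacuation) ends on cell (i,j). -/

import Mathlib

open scoped Classical
noncomputable section

/-- A cell of a tableau diagram: (row, column). -/
abbrev Cell := ℕ × ℕ

/-- The right-justified diagram of a partition `lam`: row `i` occupies the
columns `lam₀ - lamᵢ, …, lam₀ - 1` (all rows aligned at the right). -/
def rjDiagram (lam : List ℕ) : Set Cell :=
  {p | p.1 < lam.length ∧ lam.headI - lam.getD p.1 0 ≤ p.2 ∧ p.2 < lam.headI}

/-- `t` is a standard tableau of the diagram `D` with entries `1, …, N`: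
a bijective filling, strictly increasing along rows and columns (and `0`
outside the diagram). -/
def IsStandard (D : Set Cell) (N : ℕ) (t : Cell → ℕ) : Prop :=
  Set.BijOn t D (Set.Icc 1 N) ∧
  (∀ r c : ℕ, (r, c) ∈ D → (r, c + 1) ∈ D → t (r, c) < t (r, c + 1)) ∧
  (∀ r c : ℕ, (r, c) ∈ D → (r + 1, c) ∈ D → t (r, c) < t (r + 1, c)) ∧
  (∀ p, p ∉ D → t p = 0)

/-- `k` is a braid hook of `t`: the consecutive entries `k-1, k, k+1` occupy cells
with `k-1` immediately left of `k`, `k+1` immediately below `k`, and no cell of the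
diagram immediately below the cell of `k-1`. -/
def BraidHook (D : Set Cell) (t : Cell → ℕ) (k : ℕ) : Prop :=
  ∃ r c : ℕ, (r, c) ∈ D ∧ (r, c + 1) ∈ D ∧ (r + 1, c + 1) ∈ D ∧ (r + 1, c) ∉ D ∧
    t (r, c) + 1 = k ∧ t (r, c + 1) = k ∧ t (r + 1, c + 1) = k + 1

/-- `lam` is a partition: weakly decreasing list of positive integers. -/
def IsPartition (lam : List ℕ) : Prop :=
  lam.Pairwise (· ≥ ·) ∧ ∀ x ∈ lam, 0 < x

/-- Swap the entries `i` and `i+1` in the filling `t`. -/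
def swapVals (i : ℕ) (t : Cell → ℕ) : Cell → ℕ :=
  fun p => if t p = i then i + 1 else if t p = i + 1 then i else t p

/-- The Bender–Knuth type involution `τᵢ`: interchange `i` and `i+1` if the result
is again standard; otherwise do nothing. -/
def tauT (D : Set Cell) (N i : ℕ) (t : Cell → ℕ) : Cell → ℕ :=
  if IsStandard D N (swapVals i t) then swapVals i t else t

/-- Partial promotion `∂ₖ = τₖ τₖ₊₁ ⋯ τ_{N-1}` (as a right action: `τₖ` applied first). -/
def dPart (D : Set Cell) (N k : ℕ) (t : Cell → ℕ) : Cell → ℕ :=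
  (List.range' k (N - k)).foldl (fun s i => tauT D N i s) t

/-- Partial inverse promotion `∂*ₖ = τ_{k-1} τ_{k-2} ⋯ τ₁`. -/
def dStar (D : Set Cell) (N k : ℕ) (t : Cell → ℕ) : Cell → ℕ :=
  ((List.range' 1 (k - 1)).reverse).foldl (fun s i => tauT D N i s) t

/-- Promotion `∂ = τ₁ τ₂ ⋯ τ_{N-1}`. -/
def promT (D : Set Cell) (N : ℕ) : (Cell → ℕ) → Cell → ℕ := dPart D N 1

/-- Inverse promotion `∂* = τ_{N-1} ⋯ τ₁`. -/
def invPromT (D : Set Cell) (N : ℕ) : (Cell → ℕ) → Cell → ℕ := dStar D N N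

/-- Evacuation `ε = (τ₁⋯τ_{N-1})(τ₁⋯τ_{N-2})⋯(τ₁τ₂)(τ₁)` (right action: leftmost
block applied first). -/
def evacT (D : Set Cell) (N : ℕ) (t : Cell → ℕ) : Cell → ℕ :=
  (List.range (N - 1)).foldl
    (fun s j => (List.range' 1 (N - 1 - j)).foldl (fun u i => tauT D N i u) s) t

/-- Dual evacuation `ε* = (τ_{N-1}⋯τ₁)(τ_{N-1}⋯τ₂)⋯(τ_{N-1})`. -/
def dualEvacT (D : Set Cell) (N : ℕ) (t : Cell → ℕ) : Cell → ℕ :=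
  (List.range (N - 1)).foldl
    (fun s j => ((List.range' (j + 1) (N - 1 - j)).reverse).foldl (fun u i => tauT D N i u) s) t

/-- The odd promotion operator `τₒ = ∏_{i odd} τᵢ`. -/
def tauOddT (D : Set Cell) (N : ℕ) (t : Cell → ℕ) : Cell → ℕ :=
  ((List.range' 1 (N - 1)).filter (fun i => i % 2 = 1)).foldl (fun s i => tauT D N i s) t

/-- The even promotion operator `τₑ = ∏_{i even} τᵢ`. -/
def tauEvenT (D : Set Cell) (N : ℕ) (t : Cell → ℕ) : Cell → ℕ :=
  ((List.range' 1 (N - 1)).filter (fun i => i % 2 = 0)).foldl (fun s i => tauT D N i s) t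

/-- One step of the promotion (jeu-de-taquin) sliding path: from cell `a` move to
the right or lower neighbor `b ∈ D`, whichever has the smaller entry. -/
def PromStep (D : Set Cell) (t : Cell → ℕ) (a b : Cell) : Prop :=
  b ∈ D ∧
  ((b = (a.1, a.2 + 1) ∧ ((a.1 + 1, a.2) ∉ D ∨ t b < t (a.1 + 1, a.2))) ∨
   (b = (a.1 + 1, a.2) ∧ ((a.1, a.2 + 1) ∉ D ∨ t b < t (a.1, a.2 + 1))))

/-- The promotion sliding path `L` of `t`: starts at the cell containing `1`,
follows promotion steps, and ends at a cell with no right or lower neighbor. -/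
def IsPromPath (D : Set Cell) (t : Cell → ℕ) (path : List Cell) : Prop :=
  path ≠ [] ∧ path.headI ∈ D ∧ t path.headI = 1 ∧
  List.Chain' (PromStep D t) path ∧
  (path.getLast!.1, path.getLast!.2 + 1) ∉ D ∧
  (path.getLast!.1 + 1, path.getLast!.2) ∉ D

/-- One step of the inverse promotion sliding path: from cell `a` move to the left
or upper neighbor `b ∈ D`, whichever has the larger entry. -/
def InvPromStep (D : Set Cell) (t : Cell → ℕ) (a b : Cell) : Prop :=
  b ∈ D ∧
  ((a = (b.1, b.2 + 1) ∧ (∀ r, r + 1 = a.1 → ((r, a.2) ∉ D ∨ t (r, a.2) < t b))) ∨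
   (a = (b.1 + 1, b.2) ∧ (∀ c, c + 1 = a.2 → ((a.1, c) ∉ D ∨ t (a.1, c) < t b))))

/-- The inverse promotion sliding path `R` of `t`: starts at the cell containing the
maximal entry `N`, follows inverse promotion steps, and ends at a cell with no left
or upper neighbor. -/
def IsInvPromPath (D : Set Cell) (t : Cell → ℕ) (N : ℕ) (path : List Cell) : Prop :=
  path ≠ [] ∧ path.headI ∈ D ∧ t path.headI = N ∧
  List.Chain' (InvPromStep D t) path ∧
  (∀ c, c + 1 = path.getLast!.2 → (path.getLast!.1, c) ∉ D) ∧
  (∀ r, r + 1 = path.getLast!.1 → (r, path.getLast!.2) ∉ D)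

/-- `a` and `b` are consecutive cells of `path` (in this order). -/
def AdjIn (path : List Cell) (a b : Cell) : Prop :=
  ∃ i, path[i]? = some a ∧ path[i + 1]? = some b

/-! ### Auxiliary machinery -/

lemma pe_getLast!_eq {α : Type*} [Inhabited α] (l : List α) (h : l ≠ []) :
    l.getLast! = l.getLast h := by
  cases l with
  | nil => simp at h
  | cons a t => simp [List.getLast!, List.getLast?_eq_getLast h]

lemma pe_getLast!_mem {α : Type*} [Inhabited α] (l : List α) (h : l ≠ []) :
    l.getLast! ∈ l := by
  rw [pe_getLast!_eq l h]; exact List.getLast_mem h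

lemma pe_headI_mem {α : Type*} [Inhabited α] (l : List α) (h : l ≠ []) :
    l.headI ∈ l := by
  cases l with
  | nil => simp at h
  | cons a t => simp

lemma pe_std_memIcc {D : Set Cell} {N : ℕ} {t : Cell → ℕ} (ht : IsStandard D N t)
    {x : Cell} (hx : x ∈ D) : 1 ≤ t x ∧ t x ≤ N := ht.1.1 hx

lemma pe_std_memD {D : Set Cell} {N : ℕ} {t : Cell → ℕ} (ht : IsStandard D N t)
    {x : Cell} (hx : 1 ≤ t x) : x ∈ D := by
  by_contra h
  rw [ht.2.2.2 x h] at hx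
  omega

lemma pe_std_inj {D : Set Cell} {N : ℕ} {t : Cell → ℕ} (ht : IsStandard D N t)
    {x y : Cell} (hx : x ∈ D) (hy : y ∈ D) (h : t x = t y) : x = y :=
  ht.1.2.1 hx hy h

/-- A step of the sliding path increases the entry. -/
lemma pe_step_lt {D : Set Cell} {N : ℕ} {u : Cell → ℕ} (hu : IsStandard D N u)
    {a b : Cell} (ha : a ∈ D) (hs : PromStep D u a b) : b ∈ D ∧ u a < u b := by
  obtain ⟨hbD, h | h⟩ := hs
  · refine ⟨hbD, ?_⟩
    have := hu.2.1 a.1 a.2 ha (h.1 ▸ hbD)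
    rwa [← h.1] at this
  · refine ⟨hbD, ?_⟩
    have := hu.2.2.1 a.1 a.2 ha (h.1 ▸ hbD)
    rwa [← h.1] at this

/-- Along a sliding chain starting in `D`, all cells are in `D` and the entries are
bounded by the entry at the last cell. -/
lemma pe_chain_facts {D : Set Cell} {N : ℕ} {u : Cell → ℕ} (hu : IsStandard D N u) :
    ∀ l : List Cell, List.Chain' (PromStep D u) l → l.headI ∈ D →
      (∀ x ∈ l, x ∈ D) ∧ (∀ x ∈ l, u x ≤ u l.getLast!) := by
  intro l
  induction l with
  | nil => simp
  | cons a l ih =>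
    intro hc hh
    cases l with
    | nil =>
      simp only [List.headI] at hh
      constructor
      · intro x hx; simp at hx; simpa [hx]
      · intro x hx; simp at hx; simp [hx, pe_getLast!_eq [a] (by simp)]
    | cons b l' =>
      simp only [List.Chain', List.isChain_cons_cons] at hc
      simp only [List.headI] at hh
      have hstep := pe_step_lt hu hh hc.1
      have IH := ih hc.2 hstep.1
      have hlast : (a :: b :: l').getLast! = (b :: l').getLast! := by
        rw [pe_getLast!_eq _ (by simp : (a :: b :: l') ≠ []),
          pe_getLast!_eq _ (by simp : (b :: l') ≠ []), List.getLast_cons]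
      constructor
      · intro x hx
        rcases List.mem_cons.mp hx with rfl | hx
        · exact hh
        · exact IH.1 x hx
      · intro x hx
        rcases List.mem_cons.mp hx with rfl | hx
        · rw [hlast]
          exact le_trans (le_of_lt hstep.2) (IH.2 b (by simp))
        · rw [hlast]; exact IH.2 x hx

/-- A generic fold-preservation lemma. -/
lemma pe_foldl_pres {β : Type*} (Q : (Cell → ℕ) → Prop) (f : (Cell → ℕ) → β → (Cell → ℕ))
    (hf : ∀ s b, Q s → Q (f s b)) :
    ∀ (l : List β) (s : Cell → ℕ), Q s → Q (l.foldl f s) := by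
  intro l
  induction l with
  | nil => intro s hs; simpa
  | cons b l ih => intro s hs; exact ih _ (hf s b hs)

lemma pe_tau_std {D : Set Cell} {N i : ℕ} {t : Cell → ℕ} (ht : IsStandard D N t) :
    IsStandard D N (tauT D N i t) := by
  unfold tauT; split_ifs with h
  · exact h
  · exact ht

lemma pe_foldl_tau_std {D : Set Cell} {N : ℕ} {t : Cell → ℕ} (ht : IsStandard D N t)
    (l : List ℕ) : IsStandard D N (l.foldl (fun s i => tauT D N i s) t) :=
  pe_foldl_pres (IsStandard D N) _ (fun s b hs => pe_tau_std hs) l t ht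

lemma pe_evac_std {D : Set Cell} {N : ℕ} {t : Cell → ℕ} (ht : IsStandard D N t) :
    IsStandard D N (evacT D N t) := by
  unfold evacT
  exact pe_foldl_pres (IsStandard D N) _
    (fun s j hs => pe_foldl_tau_std hs _) _ t ht

/-- Swapping non-adjacent consecutive entries preserves standardness. -/
lemma pe_swap_std {D : Set Cell} {N : ℕ} {u : Cell → ℕ} (hu : IsStandard D N u)
    {a b : Cell} {i : ℕ} (ha : a ∈ D) (hb : b ∈ D) (hua : u a = i) (hub : u b = i + 1)
    (hi : 1 ≤ i) (hiN : i + 1 ≤ N)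
    (hnr : b ≠ (a.1, a.2 + 1)) (hnd : b ≠ (a.1 + 1, a.2)) :
    IsStandard D N (swapVals i u) := by
  have hval : ∀ p, swapVals i u p = if u p = i then i + 1 else if u p = i + 1 then i else u p :=
    fun p => rfl
  have key : ∀ r c : ℕ, (r, c) ∈ D → (r, c + 1) ∈ D →
      ¬((r, c) = a ∧ (r, c + 1) = b) → swapVals i u (r, c) < swapVals i u (r, c + 1) := by
    intro r c h1 h2 hne
    have hlt := hu.2.1 r c h1 h2
    rw [hval, hval]
    split_ifs <;>
      first
        | omega
        | exact absurd ⟨pe_std_inj hu h1 ha (by omega), pe_std_inj hu h2 hb (by omega)⟩ hne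
  have keyc : ∀ r c : ℕ, (r, c) ∈ D → (r + 1, c) ∈ D →
      ¬((r, c) = a ∧ (r + 1, c) = b) → swapVals i u (r, c) < swapVals i u (r + 1, c) := by
    intro r c h1 h2 hne
    have hlt := hu.2.2.1 r c h1 h2
    rw [hval, hval]
    split_ifs <;>
      first
        | omega
        | exact absurd ⟨pe_std_inj hu h1 ha (by omega), pe_std_inj hu h2 hb (by omega)⟩ hne
  refine ⟨?_, ?_, ?_, ?_⟩
  · -- bijectivity
    have hmap : Set.MapsTo (swapVals i u) D (Set.Icc 1 N) := by
      intro x hx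
      have hx' := pe_std_memIcc hu hx
      rw [hval]
      split_ifs <;> simp [Set.mem_Icc] <;> omega
    refine ⟨hmap, ?_, ?_⟩
    · intro x hx y hy hxy
      apply pe_std_inj hu hx hy
      rw [hval, hval] at hxy
      have hxI := pe_std_memIcc hu hx
      have hyI := pe_std_memIcc hu hy
      split_ifs at hxy <;> omega
    · intro y hy
      simp only [Set.mem_Icc] at hy
      by_cases hyi : y = i
      · refine ⟨b, hb, ?_⟩
        rw [hval]; rw [hub]; simp [hyi]; try omega
      · by_cases hyi1 : y = i + 1
        · refine ⟨a, ha, ?_⟩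
          rw [hval]; rw [hua]; simp [hyi1]
        · obtain ⟨x, hx, hxv⟩ := hu.1.2.2 (Set.mem_Icc.mpr hy)
          refine ⟨x, hx, ?_⟩
          rw [hval, hxv]
          simp [hyi, hyi1]
  · intro r c h1 h2
    refine key r c h1 h2 ?_
    rintro ⟨rfl, hbe⟩
    exact hnr hbe.symm
  · intro r c h1 h2
    refine keyc r c h1 h2 ?_
    rintro ⟨rfl, hbe⟩
    exact hnd hbe.symm
  · intro p hp
    have := hu.2.2.2 p hp
    rw [hval, this]
    simp only [if_neg (by omega : ¬(0 = i)), if_neg (by omega : ¬(0 = i + 1))]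

lemma pe_headI_append {α : Type*} [Inhabited α] (l : List α) (x : α) (h : l ≠ []) :
    (l ++ [x]).headI = l.headI := by
  cases l with
  | nil => simp at h
  | cons a t => rfl

lemma pe_getLast!_concat {α : Type*} [Inhabited α] (l : List α) (x : α) :
    (l ++ [x]).getLast! = x := by
  rw [pe_getLast!_eq _ (by simp)]
  exact List.getLast_concat

lemma pe_getLast?_eq {α : Type*} [Inhabited α] (l : List α) (h : l ≠ []) :
    l.getLast? = some l.getLast! := by
  rw [pe_getLast!_eq l h]; exact List.getLast?_eq_getLast h

/-- Invariant describing the partial Bender–Knuth promotion `τ₁⋯τ_k` of `t`. -/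
structure PEInv (D : Set Cell) (t : Cell → ℕ) (k : ℕ) (T : Cell → ℕ) (P : List Cell) : Prop where
  ne : P ≠ []
  head1 : t P.headI = 1
  headD : P.headI ∈ D
  chainR : List.Chain' (fun a b => PromStep D t a b ∧ T a = t b - 1 ∧ t b ≤ k + 1) P
  lastT : T P.getLast! = k + 1
  lastt : t P.getLast! ≤ k + 1
  small : ∀ x, x ∉ P → t x ≤ k + 1 → T x = t x - 1
  big : ∀ x, x ∉ P → k + 1 < t x → T x = t x
  corner : ∀ y, (y = (P.getLast!.1, P.getLast!.2 + 1) ∨ y = (P.getLast!.1 + 1, P.getLast!.2)) →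
      y ∈ D → k + 2 ≤ t y

lemma pe_invariant {D : Set Cell} {N : ℕ} {t : Cell → ℕ} (ht : IsStandard D N t)
    (hN : 1 ≤ N) :
    ∀ k, k ≤ N - 1 →
      ∃ P, PEInv D t k ((List.range' 1 k).foldl (fun s i => tauT D N i s) t) P := by
  intro k
  induction k with
  | zero =>
    intro _
    obtain ⟨x₁, hx₁D, hx₁v⟩ := ht.1.2.2 (Set.mem_Icc.mpr ⟨le_refl 1, hN⟩)
    have hlast : ([x₁] : List Cell).getLast! = x₁ := by
      rw [pe_getLast!_eq _ (by simp)]; rfl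
    refine ⟨[x₁], ?_, ?_, ?_, ?_, ?_, ?_, ?_, ?_, ?_⟩
    · simp
    · simpa using hx₁v
    · simpa using hx₁D
    · exact List.isChain_singleton _
    · simp only [List.range'_zero, List.foldl_nil, hlast]; omega
    · rw [hlast]; omega
    · intro x hx hxle
      simp only [List.range'_zero, List.foldl_nil]
      simp only [List.mem_singleton] at hx
      have hx0 : t x = 0 := by
        rcases Nat.lt_or_ge (t x) 1 with h | h
        · omega
        · exact absurd (pe_std_inj ht (pe_std_memD ht h) hx₁D (by omega)) hx
      omega
    · intro x _ _; simp
    · intro y hy hyD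
      rw [hlast] at hy
      have h1 : 1 ≤ t y := (pe_std_memIcc ht hyD).1
      rcases Nat.lt_or_ge (t y) 2 with h | h
      · exfalso
        have : y = x₁ := pe_std_inj ht hyD hx₁D (by omega)
        rcases hy with hy | hy <;> rw [this] at hy <;> simp [Prod.ext_iff] at hy
      · exact h
  | succ k IH =>
    intro hk1
    obtain ⟨P, inv⟩ := IH (by omega)
    set T := (List.range' 1 k).foldl (fun s i => tauT D N i s) t with hT
    have hsplit : (List.range' 1 (k + 1)).foldl (fun s i => tauT D N i s) t
        = tauT D N (k + 1) T := by
      have h1 : (1 : ℕ) + 1 * k = k + 1 := by ring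
      rw [List.range'_concat, List.foldl_append, h1]
      rfl
    rw [hsplit]
    have hTstd : IsStandard D N T := pe_foldl_tau_std ht _
    set L := P.getLast! with hL
    have hLP : L ∈ P := pe_getLast!_mem P inv.ne
    have hTL : T L = k + 1 := by rw [hL]; exact inv.lastT
    have htL : t L ≤ k + 1 := by rw [hL]; exact inv.lastt
    have hcornerL : ∀ y, (y = (L.1, L.2 + 1) ∨ y = (L.1 + 1, L.2)) → y ∈ D → k + 2 ≤ t y := by
      rw [hL]; exact inv.corner
    have hchainP : List.Chain' (PromStep D t) P := inv.chainR.imp (fun a b h => h.1)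
    have hfacts := pe_chain_facts ht P hchainP inv.headD
    have hLD : L ∈ D := hfacts.1 _ hLP
    obtain ⟨x₂, hx₂D, hx₂v⟩ := ht.1.2.2 (Set.mem_Icc.mpr ⟨(by omega : 1 ≤ k + 2), (by omega : k + 2 ≤ N)⟩)
    have hx₂P : x₂ ∉ P := by
      intro h
      have h2 := hfacts.2 x₂ h
      have h3 := inv.lastt
      rw [hx₂v] at h2
      omega
    have hTx₂ : T x₂ = k + 2 := by
      have := inv.big x₂ hx₂P (by omega)
      rw [hx₂v] at this
      exact this
    by_cases hadj : x₂ = (L.1, L.2 + 1) ∨ x₂ = (L.1 + 1, L.2)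
    · -- the next entry is adjacent to the current front: path extends, no swap
      have hnostd : ¬ IsStandard D N (swapVals (k + 1) T) := by
        intro hstd
        have hswL : swapVals (k + 1) T L = k + 2 := by
          unfold swapVals; rw [hTL]; simp
        have hswx : swapVals (k + 1) T x₂ = k + 1 := by
          unfold swapVals
          rw [hTx₂, if_neg (by omega), if_pos rfl]
        have h2 : swapVals (k + 1) T L < swapVals (k + 1) T x₂ := by
          rcases hadj with h | h
          · rw [h]; exact hstd.2.1 L.1 L.2 hLD (h ▸ hx₂D)
          · rw [h]; exact hstd.2.2.1 L.1 L.2 hLD (h ▸ hx₂D)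
        rw [hswL, hswx] at h2
        omega
      have hT' : tauT D N (k + 1) T = T := by
        unfold tauT; rw [if_neg hnostd]
      rw [hT']
      have hstep : PromStep D t L x₂ := by
        refine ⟨hx₂D, ?_⟩
        rcases hadj with h | h
        · refine Or.inl ⟨h, ?_⟩
          by_cases hdD : (L.1 + 1, L.2) ∈ D
          · refine Or.inr ?_
            have h1 := hcornerL (L.1 + 1, L.2) (Or.inr rfl) hdD
            have h2 : t (L.1 + 1, L.2) ≠ k + 2 := by
              intro he
              have : (L.1 + 1, L.2) = x₂ := pe_std_inj ht hdD hx₂D (by omega)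
              rw [h] at this
              exact absurd (congrArg Prod.fst this) (by simp)
            rw [← h] at *
            omega
          · exact Or.inl hdD
        · refine Or.inr ⟨h, ?_⟩
          by_cases hdD : (L.1, L.2 + 1) ∈ D
          · refine Or.inr ?_
            have h1 := hcornerL (L.1, L.2 + 1) (Or.inl rfl) hdD
            have h2 : t (L.1, L.2 + 1) ≠ k + 2 := by
              intro he
              have : (L.1, L.2 + 1) = x₂ := pe_std_inj ht hdD hx₂D (by omega)
              rw [h] at this
              exact absurd (congrArg Prod.fst this) (by simp)
            rw [← h] at *
            omega
          · exact Or.inl hdD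
      have hlast' : (P ++ [x₂]).getLast! = x₂ := pe_getLast!_concat P x₂
      refine ⟨P ++ [x₂], ?_, ?_, ?_, ?_, ?_, ?_, ?_, ?_, ?_⟩
      · simp
      · rw [pe_headI_append P x₂ inv.ne]; exact inv.head1
      · rw [pe_headI_append P x₂ inv.ne]; exact inv.headD
      · refine List.isChain_append.mpr ⟨inv.chainR.imp ?_, List.isChain_singleton x₂, ?_⟩
        · rintro a b ⟨h1, h2, h3⟩
          exact ⟨h1, h2, by omega⟩
        · intro x hx y hy
          simp only [List.head?_cons, Option.mem_some_iff] at hy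
          rw [pe_getLast?_eq P inv.ne] at hx
          simp only [Option.mem_some_iff] at hx
          subst hx; subst hy
          refine ⟨?_, ?_, by omega⟩
          · rw [← hL]; exact hstep
          · rw [← hL, hTL, hx₂v]; omega
      · rw [hlast', hTx₂]
      · rw [hlast', hx₂v]
      · intro x hx hxle
        simp only [List.mem_append, List.mem_singleton] at hx
        push_neg at hx
        rcases Nat.lt_or_ge (t x) (k + 2) with h | h
        · exact inv.small x hx.1 (by omega)
        · exfalso
          exact hx.2 (pe_std_inj ht (pe_std_memD ht (by omega)) hx₂D (by omega))
      · intro x hx hxgt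
        simp only [List.mem_append, List.mem_singleton] at hx
        push_neg at hx
        exact inv.big x hx.1 (by omega)
      · intro y hy hyD
        rw [hlast'] at hy
        rcases hy with hy | hy
        · have := ht.2.1 x₂.1 x₂.2 hx₂D (hy ▸ hyD)
          rw [← hy, hx₂v] at this
          omega
        · have := ht.2.2.1 x₂.1 x₂.2 hx₂D (hy ▸ hyD)
          rw [← hy, hx₂v] at this
          omega
    · -- non-adjacent: the Bender–Knuth move swaps `k+1` and `k+2`
      push_neg at hadj
      have hstd : IsStandard D N (swapVals (k + 1) T) :=
        pe_swap_std hTstd hLD hx₂D hTL (by rw [hTx₂]) (by omega) (by omega)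
          hadj.1 hadj.2
      have hT' : tauT D N (k + 1) T = swapVals (k + 1) T := by
        unfold tauT; rw [if_pos hstd]
      rw [hT']
      have hswv : ∀ p, T p ≠ k + 1 → T p ≠ k + 2 → swapVals (k + 1) T p = T p := by
        intro p h1 h2
        unfold swapVals
        rw [if_neg h1, if_neg (by omega)]
      have hswL : swapVals (k + 1) T L = k + 2 := by unfold swapVals; rw [hTL]; simp
      have hswx₂ : swapVals (k + 1) T x₂ = k + 1 := by
        unfold swapVals
        rw [hTx₂, if_neg (by omega), if_pos rfl]
      refine ⟨P, ?_, ?_, ?_, ?_, ?_, ?_, ?_, ?_, ?_⟩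
      · exact inv.ne
      · exact inv.head1
      · exact inv.headD
      · refine inv.chainR.imp ?_
        rintro a b ⟨h1, h2, h3⟩
        refine ⟨h1, ?_, by omega⟩
        rw [hswv a (by omega) (by omega)]
        exact h2
      · rw [← hL, hswL]
      · rw [← hL]; omega
      · intro x hx hxle
        rcases Nat.lt_or_ge (t x) (k + 2) with h | h
        · have h2 := inv.small x hx (by omega)
          rw [hswv x (by omega) (by omega)]
          exact h2
        · have hxx : x = x₂ := pe_std_inj ht (pe_std_memD ht (by omega)) hx₂D (by omega)
          rw [hxx, hswx₂, hx₂v]; omega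
      · intro x hx hxgt
        have h2 := inv.big x hx (by omega)
        rw [hswv x (by omega) (by omega)]
        exact h2
      · intro y hy hyD
        rw [← hL] at hy
        have h1 := hcornerL y hy hyD
        have h2 : t y ≠ k + 2 := by
          intro he
          have : y = x₂ := pe_std_inj ht hyD hx₂D (by omega)
          rcases hy with hy | hy
          · exact hadj.1 (this ▸ hy)
          · exact hadj.2 (this ▸ hy)
        omega

/-- Delete the cell `e` from a filling. -/
def peRes (e : Cell) (s : Cell → ℕ) : Cell → ℕ := fun p => if p = e then 0 else s p

lemma peRes_ne {e : Cell} {s : Cell → ℕ} {p : Cell} (h : p ≠ e) : peRes e s p = s p :=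
  if_neg h

/-- Removing the corner cell holding the maximal entry preserves standardness. -/
lemma peRes_std {D : Set Cell} {N : ℕ} {w : Cell → ℕ} {e : Cell}
    (heD : e ∈ D) (hc1 : (e.1, e.2 + 1) ∉ D) (hc2 : (e.1 + 1, e.2) ∉ D)
    (hN : 1 ≤ N) (hw : w e = N) :
    IsStandard D N w ↔ IsStandard (D \ {e}) (N - 1) (peRes e w) := by
  constructor
  · intro hs
    refine ⟨⟨?_, ?_, ?_⟩, ?_, ?_, ?_⟩
    · rintro x ⟨hxD, hxe⟩
      simp only [Set.mem_singleton_iff] at hxe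
      have h1 := pe_std_memIcc hs hxD
      have h2 : w x ≠ N := fun h => hxe (pe_std_inj hs hxD heD (by omega))
      rw [peRes_ne hxe]
      simp only [Set.mem_Icc]; omega
    · rintro x ⟨hxD, hxe⟩ y ⟨hyD, hye⟩ hxy
      simp only [Set.mem_singleton_iff] at hxe hye
      rw [peRes_ne hxe, peRes_ne hye] at hxy
      exact pe_std_inj hs hxD hyD hxy
    · intro y hy
      simp only [Set.mem_Icc] at hy
      obtain ⟨x, hxD, hxv⟩ := hs.1.2.2 (Set.mem_Icc.mpr ⟨hy.1, by omega⟩)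
      have hxe : x ≠ e := by
        intro h; rw [h, hw] at hxv; omega
      exact ⟨x, ⟨hxD, by simpa using hxe⟩, by rw [peRes_ne hxe]; exact hxv⟩
    · rintro r c ⟨h1, h1e⟩ ⟨h2, h2e⟩
      simp only [Set.mem_singleton_iff] at h1e h2e
      rw [peRes_ne h1e, peRes_ne h2e]
      exact hs.2.1 r c h1 h2
    · rintro r c ⟨h1, h1e⟩ ⟨h2, h2e⟩
      simp only [Set.mem_singleton_iff] at h1e h2e
      rw [peRes_ne h1e, peRes_ne h2e]
      exact hs.2.2.1 r c h1 h2
    · intro p hp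
      by_cases hpe : p = e
      · rw [hpe]; exact if_pos rfl
      · rw [peRes_ne hpe]
        refine hs.2.2.2 p ?_
        intro hpD
        exact hp ⟨hpD, by simpa using hpe⟩
  · intro hs
    have hval : ∀ x ∈ D, x ≠ e → 1 ≤ w x ∧ w x ≤ N - 1 := by
      intro x hxD hxe
      have := hs.1.1 (⟨hxD, by simpa using hxe⟩ : x ∈ D \ {e})
      rw [peRes_ne hxe] at this
      simpa using this
    refine ⟨⟨?_, ?_, ?_⟩, ?_, ?_, ?_⟩
    · intro x hxD
      by_cases hxe : x = e
      · rw [hxe, hw]; simp only [Set.mem_Icc]; omega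
      · have := hval x hxD hxe; simp only [Set.mem_Icc]; omega
    · intro x hxD y hyD hxy
      by_cases hxe : x = e <;> by_cases hye : y = e
      · rw [hxe, hye]
      · exfalso
        have := hval y hyD hye
        rw [hxe, hw] at hxy
        omega
      · exfalso
        have := hval x hxD hxe
        rw [hye, hw] at hxy
        omega
      · have := hs.1.2.1 (⟨hxD, by simpa using hxe⟩ : x ∈ D \ {e})
          (⟨hyD, by simpa using hye⟩ : y ∈ D \ {e})
        rw [peRes_ne hxe, peRes_ne hye] at this
        exact this hxy
    · intro y hy
      simp only [Set.mem_Icc] at hy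
      by_cases hyN : y = N
      · exact ⟨e, heD, by rw [hw, hyN]⟩
      · obtain ⟨x, hxD, hxv⟩ := hs.1.2.2 (Set.mem_Icc.mpr ⟨hy.1, by omega⟩)
        rw [peRes_ne (by simpa using hxD.2)] at hxv
        exact ⟨x, hxD.1, hxv⟩
    · intro r c h1 h2
      by_cases h1e : (r, c) = e
      · exfalso
        have : ((r, c + 1) : Cell) = (e.1, e.2 + 1) := by rw [← h1e]
        rw [this] at h2
        exact hc1 h2
      · by_cases h2e : (r, c + 1) = e
        · have := hval (r, c) h1 h1e
          rw [h2e, hw]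
          omega
        · have := hs.2.1 r c ⟨h1, by simpa using h1e⟩ ⟨h2, by simpa using h2e⟩
          rwa [peRes_ne h1e, peRes_ne h2e] at this
    · intro r c h1 h2
      by_cases h1e : (r, c) = e
      · exfalso
        have : ((r + 1, c) : Cell) = (e.1 + 1, e.2) := by rw [← h1e]
        rw [this] at h2
        exact hc2 h2
      · by_cases h2e : (r + 1, c) = e
        · have := hval (r, c) h1 h1e
          rw [h2e, hw]
          omega
        · have := hs.2.2.1 r c ⟨h1, by simpa using h1e⟩ ⟨h2, by simpa using h2e⟩
          rwa [peRes_ne h1e, peRes_ne h2e] at this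
    · intro p hp
      have hpe : p ≠ e := fun h => hp (h ▸ heD)
      have := hs.2.2.2 p (fun hh => hp hh.1)
      rwa [peRes_ne hpe] at this

lemma pe_tau_res {D : Set Cell} {N : ℕ} {e : Cell}
    (heD : e ∈ D) (hc1 : (e.1, e.2 + 1) ∉ D) (hc2 : (e.1 + 1, e.2) ∉ D)
    {i : ℕ} (hi : 1 ≤ i) (hiN : i + 1 < N)
    (s : Cell → ℕ) (hs : s e = N) :
    tauT D N i s e = N ∧
      peRes e (tauT D N i s) = tauT (D \ {e}) (N - 1) i (peRes e s) := by
  have hsw : swapVals i s e = N := by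
    unfold swapVals; rw [hs, if_neg (by omega), if_neg (by omega)]
  have hcomm : peRes e (swapVals i s) = swapVals i (peRes e s) := by
    funext p
    by_cases hp : p = e
    · subst hp
      have l1 : peRes p (swapVals i s) p = 0 := if_pos rfl
      have l2 : peRes p s p = 0 := if_pos rfl
      rw [l1]
      unfold swapVals
      rw [l2, if_neg (by omega), if_neg (by omega)]
    · simp only [peRes, swapVals, if_neg hp]
  have hiff := peRes_std heD hc1 hc2 (by omega) hsw
  constructor
  · unfold tauT; split_ifs with h
    · exact hsw
    · exact hs
  · unfold tauT
    by_cases h : IsStandard D N (swapVals i s)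
    · rw [if_pos h, hcomm, if_pos (by rw [← hcomm]; exact hiff.mp h)]
    · rw [if_neg h, if_neg (fun hh => h (hiff.mpr (by rw [hcomm]; exact hh)))]

lemma pe_fold_res {D : Set Cell} {N : ℕ} {e : Cell}
    (heD : e ∈ D) (hc1 : (e.1, e.2 + 1) ∉ D) (hc2 : (e.1 + 1, e.2) ∉ D)
    (l : List ℕ) (hl : ∀ i ∈ l, 1 ≤ i ∧ i + 1 < N) :
    ∀ s : Cell → ℕ, s e = N →
      (l.foldl (fun s i => tauT D N i s) s) e = N ∧
        peRes e (l.foldl (fun s i => tauT D N i s) s)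
          = l.foldl (fun s i => tauT (D \ {e}) (N - 1) i s) (peRes e s) := by
  induction l with
  | nil => intro s hs; exact ⟨hs, rfl⟩
  | cons i l ih =>
    intro s hs
    have hi := hl i (by simp)
    have hstep := pe_tau_res heD hc1 hc2 hi.1 hi.2 s hs
    simp only [List.foldl_cons]
    have := ih (fun j hj => hl j (by simp [hj])) (tauT D N i s) hstep.1
    exact ⟨this.1, by rw [this.2, hstep.2]⟩

/-- The flattened word of the evacuation operator. -/
def peW (N : ℕ) : List ℕ :=
  ((List.range (N - 1)).map (fun j => List.range' 1 (N - 1 - j))).flatten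

lemma pe_evac_flat (D : Set Cell) (N : ℕ) (t : Cell → ℕ) :
    evacT D N t = (peW N).foldl (fun s i => tauT D N i s) t := by
  unfold evacT peW
  rw [List.foldl_flatten, List.foldl_map]

lemma pe_W_mem {N i : ℕ} (h : i ∈ peW N) : 1 ≤ i ∧ i ≤ N - 1 := by
  unfold peW at h
  rw [List.mem_flatten] at h
  obtain ⟨b, hb, hib⟩ := h
  rw [List.mem_map] at hb
  obtain ⟨j, hj, rfl⟩ := hb
  rw [List.mem_range'_1] at hib
  omega

lemma pe_W_succ {N : ℕ} (hN : 2 ≤ N) :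
    peW N = List.range' 1 (N - 1) ++ peW (N - 1) := by
  obtain ⟨M, rfl⟩ : ∃ M, N = M + 2 := ⟨N - 2, by omega⟩
  show peW (M + 2) = List.range' 1 (M + 1) ++ peW (M + 1)
  unfold peW
  show ((List.range (M + 1)).map (fun j => List.range' 1 (M + 1 - j))).flatten
    = List.range' 1 (M + 1) ++ ((List.range M).map (fun j => List.range' 1 (M - j))).flatten
  rw [List.range_succ_eq_map, List.map_cons, List.flatten_cons]
  congr 1
  apply congrArg
  rw [List.map_map]
  apply List.map_congr_left
  intro j hj
  simp [Function.comp, Nat.succ_sub_succ]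

lemma pe_res_evac {D : Set Cell} {N : ℕ} {t : Cell → ℕ} {e : Cell} (hN : 2 ≤ N)
    (heD : e ∈ D) (hc1 : (e.1, e.2 + 1) ∉ D) (hc2 : (e.1 + 1, e.2) ∉ D)
    (hTe : ((List.range' 1 (N - 1)).foldl (fun s i => tauT D N i s) t) e = N) :
    evacT D N t e = N ∧
      peRes e (evacT D N t)
        = evacT (D \ {e}) (N - 1)
            (peRes e ((List.range' 1 (N - 1)).foldl (fun s i => tauT D N i s) t)) := by
  have hsplit : evacT D N t = (peW (N - 1)).foldl (fun s i => tauT D N i s)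
      ((List.range' 1 (N - 1)).foldl (fun s i => tauT D N i s) t) := by
    rw [pe_evac_flat, pe_W_succ hN, List.foldl_append]
  have hmem : ∀ i ∈ peW (N - 1), 1 ≤ i ∧ i + 1 < N := by
    intro i hi
    have := pe_W_mem hi
    omega
  have := pe_fold_res heD hc1 hc2 (peW (N - 1)) hmem _ hTe
  rw [hsplit]
  exact ⟨this.1, by rw [this.2, pe_evac_flat]⟩

lemma pe_headI_dropLast {α : Type*} [Inhabited α] (l : List α) (h : l.dropLast ≠ []) :
    l.dropLast.headI = l.headI := by
  cases l with
  | nil => simp at h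
  | cons a t =>
    cases t with
    | nil => simp at h
    | cons b t' => rfl

lemma pe_step_res {D : Set Cell} {N : ℕ} {u : Cell → ℕ} {e : Cell}
    (hue : u e = N) (hustd : IsStandard D N u)
    {a b : Cell} (hbe : b ≠ e) (hstep : PromStep D u a b) :
    PromStep (D \ {e}) (peRes e u) a b := by
  obtain ⟨hbD, h | h⟩ := hstep
  · refine ⟨⟨hbD, by simpa using hbe⟩, Or.inl ⟨h.1, ?_⟩⟩
    rcases h.2 with hnd | hlt
    · exact Or.inl (fun hh => hnd hh.1)
    · by_cases hde : (a.1 + 1, a.2) = e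
      · exact Or.inl (fun hh => hh.2 (by simp [hde]))
      · refine Or.inr ?_
        rw [peRes_ne hbe, peRes_ne hde]
        exact hlt
  · refine ⟨⟨hbD, by simpa using hbe⟩, Or.inr ⟨h.1, ?_⟩⟩
    rcases h.2 with hnd | hlt
    · exact Or.inl (fun hh => hnd hh.1)
    · by_cases hde : (a.1, a.2 + 1) = e
      · exact Or.inl (fun hh => hh.2 (by simp [hde]))
      · refine Or.inr ?_
        rw [peRes_ne hbe, peRes_ne hde]
        exact hlt

lemma pe_chain_res {D : Set Cell} {N : ℕ} {u : Cell → ℕ} {e : Cell}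
    (hue : u e = N) (hustd : IsStandard D N u) :
    ∀ l : List Cell, List.Chain' (PromStep D u) l → (∀ x ∈ l, x ≠ e) →
      List.Chain' (PromStep (D \ {e}) (peRes e u)) l := by
  intro l
  induction l with
  | nil => simp [List.Chain']
  | cons a l ih =>
    intro hc hne
    cases l with
    | nil => simp [List.Chain']
    | cons b l' =>
      simp only [List.Chain', List.isChain_cons_cons] at hc ⊢
      exact ⟨pe_step_res hue hustd (hne b (by simp)) hc.1,
        ih hc.2 (fun x hx => hne x (by simp [hx]))⟩

lemma pe_path_res {D : Set Cell} {N : ℕ} {u : Cell → ℕ} {e : Cell}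
    (hue : u e = N) (hustd : IsStandard D N u)
    {path : List Cell} (hp : IsPromPath D u path) (hep : ∀ x ∈ path, x ≠ e) :
    IsPromPath (D \ {e}) (peRes e u) path := by
  obtain ⟨h1, h2, h3, h4, h5, h6⟩ := hp
  have hhe := hep _ (pe_headI_mem path h1)
  exact ⟨h1, ⟨h2, by simpa using hhe⟩, by rw [peRes_ne hhe]; exact h3,
    pe_chain_res hue hustd path h4 hep, fun hh => h5 hh.1, fun hh => h6 hh.1⟩

lemma pe_main : ∀ (N : ℕ) (D : Set Cell) (t : Cell → ℕ), IsStandard D N t →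
    ∀ c : Cell, t c = N → ∀ path, IsPromPath D (evacT D N t) path →
      path.getLast! = c := by
  intro N
  induction N using Nat.strong_induction_on with
  | _ N IH =>
  intro D t ht c htc path hp
  have hps := hp
  obtain ⟨hne, hheadD, hhead1, hchain, hend1, hend2⟩ := hp
  have hustd : IsStandard D N (evacT D N t) := pe_evac_std ht
  have hN1 : 1 ≤ N := by
    have h := pe_std_memIcc hustd hheadD
    rw [hhead1] at h
    exact h.2
  have hfacts := pe_chain_facts hustd path hchain hheadD
  have hcD : c ∈ D := pe_std_memD ht (by omega)
  have hlast_mem : path.getLast! ∈ path := pe_getLast!_mem path hne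
  have hlastD : path.getLast! ∈ D := hfacts.1 _ hlast_mem
  by_cases hNone : N = 1
  · subst hNone
    have hut : evacT D 1 t = t := by
      unfold evacT; simp
    have hl1 : evacT D 1 t path.getLast! = 1 := by
      have h := pe_std_memIcc hustd hlastD
      omega
    rw [hut] at hl1 hhead1
    exact pe_std_inj ht hlastD hcD (by rw [hl1, htc])
  · have hN2 : 2 ≤ N := by omega
    obtain ⟨P, inv⟩ := pe_invariant ht (by omega) (N - 1) (le_refl _)
    set T := (List.range' 1 (N - 1)).foldl (fun s i => tauT D N i s) t with hTdef
    have hTstd : IsStandard D N T := pe_foldl_tau_std ht _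
    have hTe : T P.getLast! = N := by
      have := inv.lastT
      omega
    have hchainP : List.Chain' (PromStep D t) P := inv.chainR.imp (fun a b h => h.1)
    have hPfacts := pe_chain_facts ht P hchainP inv.headD
    have heD : P.getLast! ∈ D := hPfacts.1 _ (pe_getLast!_mem P inv.ne)
    have hc1 : (P.getLast!.1, P.getLast!.2 + 1) ∉ D := by
      intro hh
      have h1 := inv.corner _ (Or.inl rfl) hh
      have h2 := (pe_std_memIcc ht hh).2
      omega
    have hc2 : (P.getLast!.1 + 1, P.getLast!.2) ∉ D := by
      intro hh
      have h1 := inv.corner _ (Or.inr rfl) hh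
      have h2 := (pe_std_memIcc ht hh).2
      omega
    have hres := pe_res_evac hN2 heD hc1 hc2 hTe
    have hue : evacT D N t P.getLast! = N := hres.1
    have he_last : (P.getLast!) ∈ path → path.getLast! = P.getLast! := by
      intro hmem
      have h1 := hfacts.2 _ hmem
      have h2 := (pe_std_memIcc hustd hlastD).2
      rw [hue] at h1
      exact pe_std_inj hustd hlastD heD (by omega)
    have hhead_ne : path.headI ≠ P.getLast! := by
      intro hh
      rw [hh, hue] at hhead1
      omega
    have hvstd : IsStandard (D \ {P.getLast!}) (N - 1) (peRes (P.getLast!) T) :=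
      (peRes_std heD hc1 hc2 (by omega) hTe).mp hTstd
    by_cases hte : t (P.getLast!) = N
    · -- the sliding path of `t` ends at the cell of `N`
      have hec : P.getLast! = c := pe_std_inj ht heD hcD (by rw [hte, htc])
      rw [← hec]
      by_contra hlne
      have henp : ∀ x ∈ path, x ≠ P.getLast! := by
        intro x hx hxe
        exact hlne (he_last (hxe ▸ hx))
      have hp' := pe_path_res hue hustd hps henp
      rw [hres.2] at hp'
      -- the predecessor of the last cell of `P`
      have hP2 : P.dropLast ≠ [] := by
        cases P with
        | nil => exact absurd rfl inv.ne
        | cons a l =>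
          cases l with
          | nil =>
            exfalso
            have h1 := inv.head1
            have h2 : (([a] : List Cell)).getLast! = a := by
              rw [pe_getLast!_eq _ (by simp)]; rfl
            rw [h2] at hte
            simp only [List.headI] at h1
            omega
          | cons b l' => simp
      have hsplitP : P.dropLast ++ [P.getLast!] = P := by
        rw [pe_getLast!_eq P inv.ne]
        exact List.dropLast_append_getLast inv.ne
      have hcR := inv.chainR
      rw [← hsplitP] at hcR; unfold List.Chain' at hcR; rw [List.isChain_append] at hcR
      have hqrel := hcR.2.2 P.dropLast.getLast!
        (by rw [pe_getLast?_eq _ hP2]; simp) P.getLast! (by simp)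
      obtain ⟨hstepqe, hTq, -⟩ := hqrel
      have hqP : P.dropLast.getLast! ∈ P :=
        List.dropLast_subset P (pe_getLast!_mem _ hP2)
      have hqD : P.dropLast.getLast! ∈ D := hPfacts.1 _ hqP
      have hqe : P.dropLast.getLast! ≠ P.getLast! := by
        intro hh
        have := (pe_step_lt ht hqD hstepqe).2
        rw [hh] at this
        omega
      have hvq : peRes (P.getLast!) T P.dropLast.getLast! = N - 1 := by
        rw [peRes_ne hqe, hTq, hte]
      have hIH := IH (N - 1) (by omega) (D \ {P.getLast!}) (peRes (P.getLast!) T)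
        hvstd P.dropLast.getLast! hvq path hp'
      obtain ⟨-, hor | hor⟩ := hstepqe
      · rw [hIH] at hend1
        rw [← hor.1] at hend1
        exact hend1 heD
      · rw [hIH] at hend2
        rw [← hor.1] at hend2
        exact hend2 heD
    · -- the sliding path of `t` ends elsewhere; `c` is untouched
      have hcP : c ∉ P := by
        intro hcp
        have h1 := hPfacts.2 c hcp
        have h2 := (pe_std_memIcc ht heD).2
        rw [htc] at h1
        exact hte (by omega)
      have hce : c ≠ P.getLast! := by
        intro hh
        exact hte (by rw [← hh, htc])
      have hvc : peRes (P.getLast!) T c = N - 1 := by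
        have := inv.small c hcP (by omega)
        rw [peRes_ne hce, this, htc]
      have hccorner1 : (c.1, c.2 + 1) ∉ D := by
        intro hh
        have h0 : t (c.1, c.2) = N := htc
        have h1 := ht.2.1 c.1 c.2 hcD hh
        have h2 := (pe_std_memIcc ht hh).2
        omega
      have hccorner2 : (c.1 + 1, c.2) ∉ D := by
        intro hh
        have h0 : t (c.1, c.2) = N := htc
        have h1 := ht.2.2.1 c.1 c.2 hcD hh
        have h2 := (pe_std_memIcc ht hh).2
        omega
      have hlne : path.getLast! ≠ P.getLast! := by
        intro hl
        have hpd2 : path.dropLast ≠ [] := by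
          cases path with
          | nil => exact absurd rfl hne
          | cons a l =>
            cases l with
            | nil =>
              exfalso
              have h2 : (([a] : List Cell)).getLast! = a := by
                rw [pe_getLast!_eq _ (by simp)]; rfl
              simp only [List.headI] at hhead_ne
              rw [h2] at hl
              exact hhead_ne hl
            | cons b l' => simp
        have hsplitp : path.dropLast ++ [path.getLast!] = path := by
          rw [pe_getLast!_eq path hne]
          exact List.dropLast_append_getLast hne
        have hcp' := hchain
        rw [← hsplitp] at hcp'; unfold List.Chain' at hcp'; rw [List.isChain_append] at hcp'
        have hsteppl := hcp'.2.2 path.dropLast.getLast!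
          (by rw [pe_getLast?_eq _ hpd2]; simp) path.getLast! (by simp)
        have hpP : path.dropLast.getLast! ∈ path :=
          List.dropLast_subset path (pe_getLast!_mem _ hpd2)
        have hpD : path.dropLast.getLast! ∈ D := hfacts.1 _ hpP
        have huplt := (pe_step_lt hustd hpD hsteppl).2
        have hulast : evacT D N t path.getLast! = N := by rw [hl]; exact hue
        have hheadd : path.dropLast.headI ∈ D := by
          rw [pe_headI_dropLast path hpd2]; exact hheadD
        have hdfacts := pe_chain_facts hustd path.dropLast hcp'.1 hheadd
        have hednp : ∀ x ∈ path.dropLast, x ≠ P.getLast! := by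
          intro x hx hxe
          have h1 := hdfacts.2 x hx
          rw [hxe, hue] at h1
          rw [hulast] at huplt
          omega
        have hp'' : IsPromPath (D \ {P.getLast!}) (peRes (P.getLast!) (evacT D N t))
            path.dropLast := by
          have hdhead_ne := hednp _ (pe_headI_mem _ hpd2)
          refine ⟨hpd2, ⟨hheadd, by simpa using hdhead_ne⟩, ?_,
            pe_chain_res hue hustd _ hcp'.1 hednp, ?_, ?_⟩
          · rw [peRes_ne hdhead_ne, pe_headI_dropLast path hpd2]
            exact hhead1
          · -- no right neighbor of the second-to-last cell in D \ {e}
            obtain ⟨-, hor | hor⟩ := id hsteppl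
            · intro hh
              have : (path.dropLast.getLast!.1, path.dropLast.getLast!.2 + 1) = P.getLast! := by
                rw [← hor.1, hl]
              exact hh.2 (Set.mem_singleton_iff.mpr this)
            · rcases hor.2 with hnd | hlt
              · intro hh; exact hnd hh.1
              · exfalso
                rw [hulast] at hlt
                by_cases h3 : (path.dropLast.getLast!.1, path.dropLast.getLast!.2 + 1) ∈ D
                · have h4 := (pe_std_memIcc hustd h3).2
                  omega
                · rw [hustd.2.2.2 _ h3] at hlt
                  omega
          · obtain ⟨-, hor | hor⟩ := id hsteppl
            · rcases hor.2 with hnd | hlt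
              · intro hh; exact hnd hh.1
              · exfalso
                rw [hulast] at hlt
                by_cases h3 : (path.dropLast.getLast!.1 + 1, path.dropLast.getLast!.2) ∈ D
                · have h4 := (pe_std_memIcc hustd h3).2
                  omega
                · rw [hustd.2.2.2 _ h3] at hlt
                  omega
            · intro hh
              have : (path.dropLast.getLast!.1 + 1, path.dropLast.getLast!.2) = P.getLast! := by
                rw [← hor.1, hl]
              exact hh.2 (Set.mem_singleton_iff.mpr this)
        rw [hres.2] at hp''
        have hIH := IH (N - 1) (by omega) (D \ {P.getLast!}) (peRes (P.getLast!) T)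
          hvstd c hvc path.dropLast hp''
        obtain ⟨-, hor | hor⟩ := id hsteppl
        · have : (c.1, c.2 + 1) = P.getLast! := by rw [← hIH, ← hor.1, hl]
          rw [← this] at heD
          exact hccorner1 heD
        · have : (c.1 + 1, c.2) = P.getLast! := by rw [← hIH, ← hor.1, hl]
          rw [← this] at heD
          exact hccorner2 heD
      have henp : ∀ x ∈ path, x ≠ P.getLast! := by
        intro x hx hxe
        exact hlne (he_last (hxe ▸ hx))
      have hp' := pe_path_res hue hustd hps henp
      rw [hres.2] at hp'
      exact IH (N - 1) (by omega) (D \ {P.getLast!}) (peRes (P.getLast!) T)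
        hvstd c hvc path hp'
/-- If the maximal letter `N` is in cell `(i, j)` of the standard tableau `t`, then
the promotion sliding path of `t.ε` (the evacuation of `t`) ends on cell `(i, j)`. -/
theorem promotion_path_of_evacuation_ends (D : Set Cell) (N : ℕ)
    (t : Cell → ℕ) (ht : IsStandard D N t) (i j : ℕ) (hmax : t (i, j) = N)
    (path : List Cell) (hpath : IsPromPath D (evacT D N t) path) :
    path.getLast! = (i, j) :=
  pe_main N D t ht (i, j) hmax path hpath
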